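/- Decomposition theorem for the cd-index: Let Γ be a lower Eulerian poset, B an Eulerian poset, and φ: Γ → B a strong formal subdivision of rank 0. Then Φ_Γ = Σ_{x ∈ B} ℓ^Φ_{Γ_x} · Φ_{[x, 1̂]}, where Γ_x = φ^{-1}[0̂, x], the summand for x = 0̂ is 1 · Φ_B, and Φ_Γ is the cd-index of the near-Eulerian (or Eulerian) poset Γ. -/

import Mathlib

open scoped Classical

noncomputable section

namespace CDIndex

variable {α β : Type}

/-- The natural rank function of a graded poset: `rho x` is one less than the largest
cardinality of a chain contained in `Set.Iic x` (i.e. the length of a maximal chain of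
the interval `[0̂, x]`). -/
def rho [PartialOrder α] (x : α) : ℕ :=
  sSup {k : ℕ | ∃ s : Finset α,
    IsChain (· ≤ ·) (s : Set α) ∧ (s : Set α) ⊆ Set.Iic x ∧ s.card = k + 1}

/-- A subset `S` of a poset is graded of rank `n` if every maximal chain of `S`
has exactly `n + 1` elements (i.e. length `n`). -/
def IsGradedSetOfRank [PartialOrder α] (S : Set α) (n : ℕ) : Prop :=
  ∀ s : Finset α, (s : Set α) ⊆ S → IsChain (· ≤ ·) (s : Set α) →
    (∀ t : Finset α, (t : Set α) ⊆ S → IsChain (· ≤ ·) (t : Set α) → s ⊆ t → s = t) →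
    s.card = n + 1

/-- A poset is graded of rank `n` if every maximal chain has length `n`. -/
def IsGradedOfRank (α : Type) [PartialOrder α] (n : ℕ) : Prop :=
  IsGradedSetOfRank (Set.univ : Set α) n

/-- Every interval `[s, t]` with `s < t`, `s, t ∈ S`, has equally many elements of even
rank and of odd rank. -/
def BalancedIntervalsIn [PartialOrder α] (S : Set α) : Prop :=
  ∀ s ∈ S, ∀ t ∈ S, s < t →
    {y ∈ Set.Icc s t | Even (rho y)}.ncard = {y ∈ Set.Icc s t | Odd (rho y)}.ncard

/-- An Eulerian poset of rank `n`: a graded poset with `0̂` and `1̂` in which every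
interval of positive length has equally many elements of each parity of rank. -/
def IsEulerianOfRank (α : Type) [PartialOrder α] (n : ℕ) : Prop :=
  (∃ b : α, ∀ z, b ≤ z) ∧ (∃ t : α, ∀ z, z ≤ t) ∧
    IsGradedOfRank α n ∧ BalancedIntervalsIn (Set.univ : Set α)

/-- A lower Eulerian poset of rank `n`: a graded poset with `0̂` all of whose intervals
are Eulerian. -/
def IsLowerEulerianOfRank (α : Type) [PartialOrder α] (n : ℕ) : Prop :=
  (∃ b : α, ∀ z, b ≤ z) ∧ IsGradedOfRank α n ∧ BalancedIntervalsIn (Set.univ : Set α)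

/-- A lower order ideal `S` (of a poset) which is lower Eulerian of rank `n`. -/
def IsLowerEulerianSetOfRank [PartialOrder α] (S : Set α) (n : ℕ) : Prop :=
  IsGradedSetOfRank S n ∧ BalancedIntervalsIn S

/-- The boundary of (a lower order ideal `S` of) a graded poset of rank `n`: the lower
order ideal generated by the rank `n - 1` elements which are covered by exactly one
element. -/
def boundaryIn [PartialOrder α] (S : Set α) (n : ℕ) : Set α :=
  {y | y ∈ S ∧ ∃ x ∈ S, rho x = n - 1 ∧ {z ∈ S | x ⋖ z}.ncard = 1 ∧ y ≤ x}

/-- The boundary `∂P` of a graded poset of rank `n`. -/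
def boundary (α : Type) [PartialOrder α] (n : ℕ) : Set α :=
  boundaryIn (Set.univ : Set α) n

/-- `α` is a near-Eulerian poset of rank `n`: it is obtained from an Eulerian poset `Q`
of rank `n + 1` by removing the maximal element and one element `q` of rank `n`. -/
def IsNearEulerianOfRank (α : Type) [PartialOrder α] [Finite α] (n : ℕ) : Prop :=
  ∃ (Q : Type) (_ : PartialOrder Q) (_ : Finite Q) (q top : Q),
    IsEulerianOfRank Q (n + 1) ∧ (∀ z, z ≤ top) ∧ rho q = n ∧ q ≠ top ∧
    Nonempty (α ≃o {x : Q // x ≠ q ∧ x ≠ top})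

/-- `α` is (isomorphic to) the boundary of an Eulerian poset, where `α` has rank `n`
(so the Eulerian poset has rank `n + 1`). -/
def IsBoundaryOfEulerianOfRank (α : Type) [PartialOrder α] [Finite α] (n : ℕ) : Prop :=
  ∃ (Q : Type) (_ : PartialOrder Q) (_ : Finite Q) (top : Q),
    IsEulerianOfRank Q (n + 1) ∧ (∀ z, z ≤ top) ∧
    Nonempty (α ≃o {x : Q // x ≠ top})

/-! ### Strong formal subdivisions -/

/-- A strong formal subdivision (of rank `0`, with the natural rank functions): an
order-preserving, rank-increasing, surjective map which is strongly surjective and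
satisfies the alternating-sum condition on fibers. -/
def IsSFS {α β : Type} [PartialOrder α] [PartialOrder β] (φ : α → β) : Prop :=
  Monotone φ ∧ (∀ y, rho y ≤ rho (φ y)) ∧ Function.Surjective φ ∧
  (∀ y x, φ y ≤ x → ∃ y', y ≤ y' ∧ φ y' = x ∧ rho y' = rho x) ∧
  (∀ y x, φ y ≤ x →
    (∑ᶠ y' ∈ {y' | φ y' = x ∧ y ≤ y'}, ((-1 : ℤ) ^ rho y')) = (-1) ^ rho x)

/-! ### The flag enumerator, the `ab`-index and the `cd`-index -/

variable (K : Type) [Field K] [CharZero K]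

/-- The free noncommutative algebra `K⟨a, b⟩`. -/
abbrev FA := FreeAlgebra K (Fin 2)

/-- The letter `a`. -/
def la : FA K := FreeAlgebra.ι K 0

/-- The letter `b`. -/
def lb : FA K := FreeAlgebra.ι K 1

/-- `c = a + b`. -/
def lc : FA K := la K + lb K

/-- `d = ab + ba`. -/
def ld : FA K := la K * lb K + lb K * la K

/-- The characteristic monomial `u_S = u_1 ⋯ u_n` of a set `S` of ranks, where
`u_i = b` if `i ∈ S` and `u_i = a` otherwise. -/
def uWord (n : ℕ) (S : Set ℕ) : FA K :=
  (List.ofFn fun i : Fin n => if (i : ℕ) + 1 ∈ S then lb K else la K).prod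

/-- Chains of the subposet `S` which contain the element `b0` (intended: the minimal
element of `S`). -/
def chainsIn [PartialOrder α] (S : Set α) (b0 : α) : Set (Finset α) :=
  {C | (C : Set α) ⊆ S ∧ IsChain (· ≤ ·) (C : Set α) ∧ b0 ∈ C}

/-- The flag enumerator `Υ` of the subposet `S` with minimal element `b0`, of rank `n`;
ranks are computed relative to `b0`. -/
def upsSet [PartialOrder α] (S : Set α) (b0 : α) (n : ℕ) : FA K :=
  ∑ᶠ C ∈ chainsIn S b0, uWord K n ((fun y => rho y - rho b0) '' (C : Set α))

/-- The substitution `a ↦ a - b`, `b ↦ b` turning the flag enumerator into the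
`ab`-index. -/
def toAB : FA K →ₐ[K] FA K :=
  FreeAlgebra.lift K (fun i : Fin 2 => if i = 0 then la K - lb K else lb K)

/-- The `ab`-index `Ψ` of the subposet `S` with minimal element `b0`, of rank `n`:
`Ψ(a,b) = Υ(a-b, b)`. -/
def psiS [PartialOrder α] (S : Set α) (b0 : α) (n : ℕ) : FA K :=
  toAB K (upsSet K S b0 n)

/-- The subalgebra `K⟨c, d⟩ ⊆ K⟨a, b⟩` generated by `c = a + b` and `d = ab + ba`. -/
def cdSub : Subalgebra K (FA K) := Algebra.adjoin K {lc K, ld K}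
end CDIndex

/-!
Expanding every `ab`-index as a sum over chains, the identity becomes a statement about single
chains. First, the alternating-sum condition of `φ` at the fibre over `1̂` shows that a rank
`n - 1` element `z` of `Γ` is covered by exactly one element iff `φ z ≠ 1̂`, so
`∂Γ = φ⁻¹[0̂, 1̂)`, and the summand for `x = 1̂` is `Ψ_Γ - Ψ_{∂Γ}·a`. It remains to see that
`Ψ_{∂Γ} = ∑_{x < 1̂} (Ψ_{Γ_x} - Ψ_{φ⁻¹[0̂,x)}·a) Ψ_{[x,1̂)}`. A chain of `∂Γ` with top element `y`
lies in `Γ_x` iff `φ y ≤ x` and in `φ⁻¹[0̂, x)` iff `φ y < x`; since its ranks are at most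
`ρ(φ y)`, its contributions to the right-hand side collapse, by the recursion
`Ψ_{[z,1̂)} = (a-b)^{n-ρz-1} + ∑_{z<x<1̂} (a-b)^{ρx-ρz-1} b Ψ_{[x,1̂)}` over the second element of
a chain of `[z, 1̂)`, to its own word in `Ψ_{∂Γ}`.
-/

section Chain

variable {γ : Type} [PartialOrder γ]

lemma IsChain.exists_isGreatest {s : Finset γ} (hs : IsChain (· ≤ ·) (s : Set γ))
    (hne : s.Nonempty) : ∃ m, IsGreatest (s : Set γ) m := by
  obtain ⟨m, hm⟩ := s.exists_maximal hne
  refine ⟨m, hm.prop, fun y hy => ?_⟩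
  rcases eq_or_ne y m with rfl | hym
  · rfl
  · exact (hs hy hm.prop hym).elim id (hm.le_of_ge hy)

lemma IsChain.exists_isLeast {s : Finset γ} (hs : IsChain (· ≤ ·) (s : Set γ))
    (hne : s.Nonempty) : ∃ m, IsLeast (s : Set γ) m := by
  obtain ⟨m, hm⟩ := s.exists_minimal hne
  refine ⟨m, hm.prop, fun y hy => ?_⟩
  rcases eq_or_ne y m with rfl | hym
  · rfl
  · exact (hs hy hm.prop hym).elim (hm.le_of_le hy) id

end Chain

namespace CDIndex

section Rank

variable {γ : Type} [PartialOrder γ] [Finite γ]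

lemma bddAbove_chain_lengths (x : γ) :
    BddAbove {k : ℕ | ∃ s : Finset γ,
      IsChain (· ≤ ·) (s : Set γ) ∧ (s : Set γ) ⊆ Set.Iic x ∧ s.card = k + 1} := by
  have := Fintype.ofFinite γ
  exact ⟨Fintype.card γ, fun k ⟨s, _, _, hs⟩ => by have := s.card_le_univ; omega⟩

lemma le_rho {x : γ} {k : ℕ} {s : Finset γ} (hs : IsChain (· ≤ ·) (s : Set γ))
    (hsx : (s : Set γ) ⊆ Set.Iic x) (hcard : s.card = k + 1) : k ≤ rho x :=
  le_csSup (bddAbove_chain_lengths x) ⟨s, hs, hsx, hcard⟩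

lemma exists_chain_card_eq_rho_add_one (x : γ) : ∃ s : Finset γ,
    IsChain (· ≤ ·) (s : Set γ) ∧ (s : Set γ) ⊆ Set.Iic x ∧ s.card = rho x + 1 := by
  refine Nat.sSup_mem ?_ (bddAbove_chain_lengths x)
  exact ⟨0, {x}, by simp, by simp, rfl⟩

lemma rho_strictMono : StrictMono (rho : γ → ℕ) := by
  intro x y hxy
  obtain ⟨s, hs, hsx, hcard⟩ := exists_chain_card_eq_rho_add_one x
  have hys : y ∉ s := fun hy => (hxy.trans_le (hsx hy)).false
  refine le_rho (s := insert y s) ?_ ?_ (by rw [Finset.card_insert_of_notMem hys, hcard])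
  · rw [Finset.coe_insert]
    exact hs.insert fun b hb _ => Or.inr ((hsx hb).trans hxy.le)
  · rw [Finset.coe_insert]
    exact Set.insert_subset le_rfl fun b hb => (hsx hb).trans hxy.le

lemma rho_mono : Monotone (rho : γ → ℕ) := rho_strictMono.monotone

lemma injOn_rho {s : Set γ} (hs : IsChain (· ≤ ·) s) : Set.InjOn rho s := by
  intro a ha b hb hab
  by_contra hne
  rcases hs ha hb hne with h | h
  · exact (rho_strictMono (h.lt_of_ne hne)).ne hab
  · exact (rho_strictMono (h.lt_of_ne (Ne.symm hne))).ne' hab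

namespace IsGradedOfRank

variable {n : ℕ}

lemma exists_superset_card_eq (hg : IsGradedOfRank γ n) {s : Finset γ}
    (hs : IsChain (· ≤ ·) (s : Set γ)) :
    ∃ t : Finset γ, s ⊆ t ∧ IsChain (· ≤ ·) (t : Set γ) ∧ t.card = n + 1 := by
  obtain ⟨M, hM, hsM⟩ := hs.exists_maxChain
  obtain ⟨t, rfl⟩ : ∃ t : Finset γ, (t : Set γ) = M := ⟨_, (Set.toFinite M).coe_toFinset⟩
  exact ⟨t, Finset.coe_subset.1 hsM, hM.1, hg t (Set.subset_univ _) hM.1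
    fun u _ hu htu => Finset.coe_injective (hM.2 hu (Finset.coe_subset.2 htu))⟩

lemma rho_le (hg : IsGradedOfRank γ n) (x : γ) : rho x ≤ n := by
  obtain ⟨s, hs, -, hcard⟩ := exists_chain_card_eq_rho_add_one x
  obtain ⟨t, hst, -, htcard⟩ := hg.exists_superset_card_eq hs
  have := Finset.card_le_card hst
  omega

lemma rho_top (hg : IsGradedOfRank γ n) [OrderTop γ] : rho (⊤ : γ) = n := by
  obtain ⟨t, -, ht, hcard⟩ := hg.exists_superset_card_eq (s := ∅) (by simp)
  exact (hg.rho_le ⊤).antisymm (le_rho ht (fun _ _ => le_top) hcard)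

lemma exists_le_rho_eq (hg : IsGradedOfRank γ n) {x : γ} {k : ℕ} (hxk : rho x ≤ k)
    (hkn : k ≤ n) : ∃ x', x ≤ x' ∧ rho x' = k := by
  obtain ⟨t, hxt, ht, hcard⟩ := hg.exists_superset_card_eq (s := {x}) (by simp)
  have hranks : t.image rho = Finset.range (n + 1) :=
    Finset.eq_of_subset_of_card_le
      (fun k hk => by
        obtain ⟨a, -, rfl⟩ := Finset.mem_image.1 hk
        exact Finset.mem_range.2 (Nat.lt_succ_of_le (hg.rho_le a)))
      (by rw [Finset.card_image_of_injOn (injOn_rho ht), hcard, Finset.card_range])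
  have hk : k ∈ t.image rho := hranks ▸ Finset.mem_range.2 (by omega)
  obtain ⟨x', hx't, rfl⟩ := Finset.mem_image.1 hk
  refine ⟨x', ?_, rfl⟩
  rcases eq_or_ne x x' with rfl | hne
  · rfl
  · exact (ht (hxt (Finset.mem_singleton_self x)) hx't hne).resolve_right
      fun h => (rho_strictMono (h.lt_of_ne hne.symm)).not_ge hxk

end IsGradedOfRank

end Rank

section Words

variable (K : Type) [Field K]

def psiWord (m : ℕ) (S : Set ℕ) : FA K :=
  (List.ofFn fun i : Fin m => if (i : ℕ) + 1 ∈ S then lb K else la K - lb K).prod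

lemma toAB_la : toAB K (la K) = la K - lb K := by
  simp [toAB, la]

lemma toAB_lb : toAB K (lb K) = lb K := by
  simp [toAB, lb]

lemma toAB_uWord (m : ℕ) (S : Set ℕ) : toAB K (uWord K m S) = psiWord K m S := by
  simp only [uWord, psiWord, map_list_prod, List.map_ofFn, Function.comp_def, apply_ite,
    toAB_la, toAB_lb]

lemma psiWord_add (m k : ℕ) (S : Set ℕ) :
    psiWord K (m + k) S = psiWord K m S * psiWord K k {t | t + m ∈ S} := by
  simp only [psiWord, List.ofFn_add, List.prod_append, Fin.val_castLE, Fin.val_natAdd,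
    Set.mem_ofPred_eq, add_comm _ m, add_assoc]

lemma psiWord_succ (m : ℕ) (S : Set ℕ) :
    psiWord K (m + 1) S = psiWord K m S * if m + 1 ∈ S then lb K else la K - lb K := by
  rw [psiWord, psiWord, List.ofFn_succ', List.prod_concat]
  simp

lemma psiWord_eq_pow {m : ℕ} {S : Set ℕ} (h : ∀ j ∈ S, j = 0 ∨ m < j) :
    psiWord K m S = (la K - lb K) ^ m := by
  induction m with
  | zero => simp [psiWord]
  | succ m ih =>
    rw [psiWord_succ, ih fun j hj => (h j hj).imp_right (Nat.lt_of_succ_lt),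
      if_neg fun hm => by have := h _ hm; omega, pow_succ]

lemma psiWord_add_of_le {m : ℕ} (k : ℕ) {S : Set ℕ} (h : ∀ j ∈ S, j ≤ m) :
    psiWord K (m + k) S = psiWord K m S * (la K - lb K) ^ k := by
  rw [psiWord_add, psiWord_eq_pow K (S := {t | t + m ∈ S})]
  intro j hj
  have := h _ hj
  omega

lemma psiWord_add_of_forall_eq_zero {p : ℕ} (k : ℕ) {S : Set ℕ} (hp : p + 1 ∈ S)
    (h : ∀ j ∈ S, j ≤ p → j = 0) :
    psiWord K (p + 1 + k) S = (la K - lb K) ^ p * lb K * psiWord K k {t | t + (p + 1) ∈ S} := by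
  rw [psiWord_add, psiWord_succ, if_pos hp, psiWord_eq_pow]
  intro j hj
  by_cases hjp : j ≤ p
  · exact Or.inl (h j hj hjp)
  · exact Or.inr (by omega)

end Words

section Chains

variable {γ : Type} [PartialOrder γ] [Finite γ]

def chainsFinset (S : Set γ) (b0 : γ) : Finset (Finset γ) :=
  (Set.toFinite (chainsIn S b0)).toFinset

lemma mem_chainsFinset {S : Set γ} {b0 : γ} {C : Finset γ} :
    C ∈ chainsFinset S b0 ↔ (C : Set γ) ⊆ S ∧ IsChain (· ≤ ·) (C : Set γ) ∧ b0 ∈ C :=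
  Set.Finite.mem_toFinset _

variable (K : Type) [Field K]

lemma psiS_eq_sum (S : Set γ) (b0 : γ) (m : ℕ) :
    psiS K S b0 m = ∑ C ∈ chainsFinset S b0,
      psiWord K m ((fun y => rho y - rho b0) '' (C : Set γ)) := by
  rw [psiS, upsSet, finsum_mem_eq_finite_toFinset_sum _ (Set.toFinite _), map_sum]
  exact Finset.sum_congr rfl fun C _ => toAB_uWord K m _

lemma psiS_eq_sum_ite_of_subset {S T : Set γ} (hTS : T ⊆ S) (b0 : γ) (m : ℕ) :
    psiS K T b0 m = ∑ C ∈ chainsFinset S b0,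
      if (C : Set γ) ⊆ T then psiWord K m ((fun y => rho y - rho b0) '' (C : Set γ)) else 0 := by
  rw [← Finset.sum_filter, psiS_eq_sum]
  congr 1
  ext C
  simp only [mem_chainsFinset, Finset.mem_filter]
  exact ⟨fun ⟨hT, hC⟩ => ⟨⟨hT.trans hTS, hC⟩, hT⟩, fun ⟨⟨_, hC⟩, hT⟩ => ⟨hT, hC⟩⟩

lemma le_of_mem_chainsFinset_Ico {x t : γ} {E : Finset γ}
    (hE : E ∈ chainsFinset (Set.Ico x t) x) {e : γ} (he : e ∈ E) : x ≤ e :=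
  ((mem_chainsFinset.1 hE).1 he).1

lemma insert_mem_chainsFinset_Ico {z x t : γ} {E : Finset γ} (hzx : z < x) (hzt : z < t)
    (hE : E ∈ chainsFinset (Set.Ico x t) x) : insert z E ∈ chainsFinset (Set.Ico z t) z := by
  obtain ⟨hEx, hchain, -⟩ := mem_chainsFinset.1 hE
  refine mem_chainsFinset.2 ⟨?_, ?_, Finset.mem_insert_self z E⟩ <;> rw [Finset.coe_insert]
  · exact Set.insert_subset ⟨le_rfl, hzt⟩ fun e he => ⟨hzx.le.trans (hEx he).1, (hEx he).2⟩
  · exact hchain.insert fun e he _ => Or.inl (hzx.le.trans (hEx he).1)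

lemma exists_erase_mem_chainsFinset_Ico {z t : γ} {E : Finset γ}
    (hE : E ∈ chainsFinset (Set.Ico z t) z) (hne : E ≠ {z}) :
    ∃ x, z < x ∧ x < t ∧ E.erase z ∈ chainsFinset (Set.Ico x t) x := by
  obtain ⟨hEz, hchain, hzE⟩ := mem_chainsFinset.1 hE
  have hne' : (E.erase z).Nonempty := by
    rw [Finset.nonempty_iff_ne_empty, Ne, Finset.erase_eq_empty_iff]
    exact fun h => h.elim (fun h => by simp [h] at hzE) hne
  have hchain' : IsChain (· ≤ ·) ((E.erase z : Finset γ) : Set γ) :=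
    hchain.mono (Finset.coe_subset.2 (Finset.erase_subset z E))
  obtain ⟨x, hxE', hxle⟩ := hchain'.exists_isLeast hne'
  obtain ⟨hxz, hxE⟩ := Finset.mem_erase.1 hxE'
  refine ⟨x, (hEz hxE).1.lt_of_ne' hxz, (hEz hxE).2, mem_chainsFinset.2 ⟨?_, hchain', hxE'⟩⟩
  exact fun e he => ⟨hxle he, (hEz (Finset.mem_of_mem_erase he)).2⟩

lemma psiWord_image_insert {z x : γ} {E : Finset γ}
    (hzx : z < x) (hxE : x ∈ E) (hE : ∀ e ∈ E, x ≤ e) (m : ℕ) :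
    psiWord K (rho x - rho z + m) ((fun y => rho y - rho z) '' ((insert z E : Finset γ) : Set γ))
      = (la K - lb K) ^ (rho x - rho z - 1) * lb K
          * psiWord K m ((fun y => rho y - rho x) '' (E : Set γ)) := by
  have hzx' := rho_strictMono hzx
  have hE' : ∀ e ∈ E, rho x ≤ rho e := fun e he => rho_mono (hE e he)
  obtain ⟨p, hp⟩ : ∃ p, rho x - rho z = p + 1 := ⟨rho x - rho z - 1, by omega⟩
  rw [hp, psiWord_add_of_forall_eq_zero, Nat.add_sub_cancel]
  · congr 2
    ext t
    simp only [Finset.coe_insert, Set.image_insert_eq, Set.mem_ofPred_eq, Set.mem_insert_iff,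
      Set.mem_image, Finset.mem_coe]
    constructor
    · rintro (h | ⟨e, he, h⟩)
      · omega
      · exact ⟨e, he, by have := hE' e he; omega⟩
    · rintro ⟨e, he, rfl⟩
      exact Or.inr ⟨e, he, by have := hE' e he; omega⟩
  · exact ⟨x, Finset.mem_insert_of_mem hxE, hp⟩
  · rintro j ⟨e, he, rfl⟩ hj
    dsimp only at hj ⊢
    rcases Finset.mem_insert.1 he with rfl | he
    · exact Nat.sub_self _
    · have := hE' e he
      omega

end Chains

section Interval

variable (K : Type) [Field K] {β : Type} [PartialOrder β] [OrderTop β] [Fintype β]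

lemma psiS_Ico_top_eq {z : β} (hz : z < ⊤) :
    psiS K (Set.Ico z ⊤) z (rho (⊤ : β) - rho z - 1)
      = (la K - lb K) ^ (rho (⊤ : β) - rho z - 1)
        + ∑ x with z < x ∧ x < ⊤, (la K - lb K) ^ (rho x - rho z - 1) * lb K
            * psiS K (Set.Ico x ⊤) x (rho (⊤ : β) - rho x - 1) := by
  have hsingle : {z} ∈ chainsFinset (Set.Ico z ⊤) z :=
    mem_chainsFinset.2 ⟨by simpa using hz, by simp, Finset.mem_singleton_self z⟩
  rw [psiS_eq_sum, ← Finset.add_sum_erase _ _ hsingle]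
  congr 1
  · exact psiWord_eq_pow K (by simp)
  simp_rw [psiS_eq_sum, Finset.mul_sum]
  rw [Finset.sum_sigma']
  symm
  -- a chain `E ≠ {z}` is `insert z E'`, with `E'` a chain of `[x, 1̂)` for `x` the second element
  refine Finset.sum_bij (fun p _ => insert z p.2) ?_ ?_ ?_ ?_
  · rintro ⟨x, E⟩ hp
    simp only [Finset.mem_sigma, Finset.mem_filter, Finset.mem_univ, true_and] at hp
    obtain ⟨⟨hzx, -⟩, hE⟩ := hp
    refine Finset.mem_erase.2 ⟨fun h => hzx.ne' ?_, insert_mem_chainsFinset_Ico hzx hz hE⟩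
    simpa [h] using Finset.mem_insert_of_mem (b := z) (mem_chainsFinset.1 hE).2.2
  · rintro ⟨x₁, E₁⟩ h₁ ⟨x₂, E₂⟩ h₂ heq
    simp only [Finset.mem_sigma, Finset.mem_filter, Finset.mem_univ, true_and] at h₁ h₂ heq
    have hzE₁ : z ∉ E₁ := fun h => (h₁.1.1.trans_le (le_of_mem_chainsFinset_Ico h₁.2 h)).false
    have hzE₂ : z ∉ E₂ := fun h => (h₂.1.1.trans_le (le_of_mem_chainsFinset_Ico h₂.2 h)).false
    obtain rfl : E₁ = E₂ := by
      simpa [Finset.erase_insert hzE₁, Finset.erase_insert hzE₂] using congrArg (·.erase z) heq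
    obtain rfl : x₁ = x₂ :=
      (le_of_mem_chainsFinset_Ico h₁.2 (mem_chainsFinset.1 h₂.2).2.2).antisymm
        (le_of_mem_chainsFinset_Ico h₂.2 (mem_chainsFinset.1 h₁.2).2.2)
    rfl
  · intro E hE
    obtain ⟨hne, hE⟩ := Finset.mem_erase.1 hE
    obtain ⟨x, hzx, hxt, hE'⟩ := exists_erase_mem_chainsFinset_Ico hE hne
    exact ⟨⟨x, E.erase z⟩, by simp [hzx, hxt, hE'],
      Finset.insert_erase (mem_chainsFinset.1 hE).2.2⟩
  · rintro ⟨x, E⟩ hp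
    simp only [Finset.mem_sigma, Finset.mem_filter, Finset.mem_univ, true_and] at hp ⊢
    obtain ⟨⟨hzx, hxt⟩, hE⟩ := hp
    have := rho_strictMono hzx
    have := rho_strictMono hxt
    rw [show rho (⊤ : β) - rho z - 1 = rho x - rho z + (rho (⊤ : β) - rho x - 1) by omega,
      psiWord_image_insert K hzx (mem_chainsFinset.1 hE).2.2
        fun _ => le_of_mem_chainsFinset_Ico hE]

lemma psiWord_eq_sum_mul_psiS_Ico {z : β} (hz : z < ⊤) {S : Set ℕ} (hS : ∀ j ∈ S, j ≤ rho z) :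
    psiWord K (rho (⊤ : β) - 1) S
      = ∑ x ∈ Finset.univ.erase ⊤,
          ((if z ≤ x then psiWord K (rho x) S else 0)
              - (if z < x then psiWord K (rho x - 1) S else 0) * la K)
            * psiS K (Set.Ico x ⊤) x (rho (⊤ : β) - rho x - 1) := by
  have hzn := rho_strictMono hz
  have hsub : insert z (Finset.univ.filter fun x => z < x ∧ x < ⊤) ⊆ Finset.univ.erase (⊤ : β) := by
    intro x hx
    simp only [Finset.mem_insert, Finset.mem_filter, Finset.mem_univ, true_and] at hx
    exact Finset.mem_erase.2 ⟨hx.elim (· ▸ hz.ne) (·.2.ne), Finset.mem_univ x⟩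
  have hW : ∀ m, rho z ≤ m → psiWord K m S = psiWord K (rho z) S * (la K - lb K) ^ (m - rho z) :=
    fun m hm => by rw [← psiWord_add_of_le K _ hS, Nat.add_sub_cancel' hm]
  have hterm : ∀ x ∈ Finset.univ.filter fun x => z < x ∧ x < ⊤,
      ((if z ≤ x then psiWord K (rho x) S else 0)
          - (if z < x then psiWord K (rho x - 1) S else 0) * la K)
        * psiS K (Set.Ico x ⊤) x (rho (⊤ : β) - rho x - 1)
      = -(psiWord K (rho z) S * ((la K - lb K) ^ (rho x - rho z - 1) * lb K
          * psiS K (Set.Ico x ⊤) x (rho (⊤ : β) - rho x - 1))) := by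
    intro x hx
    have hzx := (Finset.mem_filter.1 hx).2.1
    have := rho_strictMono hzx
    obtain ⟨m, hm⟩ : ∃ m, rho x = m + 1 := ⟨rho x - 1, by omega⟩
    have hlast : psiWord K (rho x) S = psiWord K (rho x - 1) S * (la K - lb K) := by
      rw [hm, psiWord_succ, if_neg fun h => by have := hS _ h; omega, Nat.add_sub_cancel]
    rw [if_pos hzx.le, if_pos hzx, hlast, hW _ (by omega),
      show rho x - 1 - rho z = rho x - rho z - 1 by omega]
    noncomm_ring
  rw [← Finset.sum_subset hsub, Finset.sum_insert (by simp), Finset.sum_congr rfl hterm,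
    Finset.sum_neg_distrib, ← Finset.mul_sum, if_pos le_rfl, if_neg (lt_irrefl z), zero_mul,
    sub_zero, ← sub_eq_add_neg, ← mul_sub, psiS_Ico_top_eq K hz, add_sub_cancel_right,
    hW _ (by omega), Nat.sub_right_comm]
  · intro x hx hxz
    simp only [Finset.mem_insert, Finset.mem_filter, Finset.mem_univ, true_and, not_or,
      not_and] at hxz
    have hzx : ¬ z ≤ x := fun h =>
      hxz.2 (h.lt_of_ne (Ne.symm hxz.1)) (lt_top_iff_ne_top.2 (Finset.ne_of_mem_erase hx))
    rw [if_neg hzx, if_neg (fun h => hzx h.le), zero_mul, sub_zero, zero_mul]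

lemma psiS_preimage_Iio_top_eq_sum {α : Type} [PartialOrder α] [Finite α] [OrderBot α]
    {φ : α → β} (hmono : Monotone φ) (hrho : ∀ y, rho y ≤ rho (φ y)) :
    psiS K (φ ⁻¹' Set.Iio ⊤) ⊥ (rho (⊤ : β) - 1)
      = ∑ x ∈ Finset.univ.erase ⊤,
          (psiS K (φ ⁻¹' Set.Iic x) ⊥ (rho x) - psiS K (φ ⁻¹' Set.Iio x) ⊥ (rho x - 1) * la K)
            * psiS K (Set.Ico x ⊤) x (rho (⊤ : β) - rho x - 1) := by
  have hexpand : ∀ x ∈ Finset.univ.erase (⊤ : β),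
      (psiS K (φ ⁻¹' Set.Iic x) ⊥ (rho x) - psiS K (φ ⁻¹' Set.Iio x) ⊥ (rho x - 1) * la K)
        * psiS K (Set.Ico x ⊤) x (rho (⊤ : β) - rho x - 1)
      = ∑ C ∈ chainsFinset (φ ⁻¹' Set.Iio ⊤) ⊥,
          ((if (C : Set α) ⊆ φ ⁻¹' Set.Iic x
              then psiWord K (rho x) ((fun y => rho y - rho (⊥ : α)) '' (C : Set α)) else 0)
            - (if (C : Set α) ⊆ φ ⁻¹' Set.Iio x
                then psiWord K (rho x - 1) ((fun y => rho y - rho (⊥ : α)) '' (C : Set α)) else 0)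
              * la K) * psiS K (Set.Ico x ⊤) x (rho (⊤ : β) - rho x - 1) := by
    intro x hx
    rw [psiS_eq_sum_ite_of_subset K (Set.preimage_mono
        (Set.Iic_subset_Iio.2 (lt_top_iff_ne_top.2 (Finset.ne_of_mem_erase hx)))),
      psiS_eq_sum_ite_of_subset K (Set.preimage_mono (Set.Iio_subset_Iio le_top)),
      Finset.sum_mul, ← Finset.sum_sub_distrib, Finset.sum_mul]
  rw [Finset.sum_congr rfl hexpand, Finset.sum_comm, psiS_eq_sum]
  refine Finset.sum_congr rfl fun C hC => ?_
  obtain ⟨hCD, hchain, hbot⟩ := mem_chainsFinset.1 hC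
  obtain ⟨y, hyC, hy⟩ := hchain.exists_isGreatest ⟨⊥, hbot⟩
  have hIic : ∀ x, (C : Set α) ⊆ φ ⁻¹' Set.Iic x ↔ φ y ≤ x :=
    fun x => ⟨fun h => h hyC, fun h c hc => (hmono (hy hc)).trans h⟩
  have hIio : ∀ x, (C : Set α) ⊆ φ ⁻¹' Set.Iio x ↔ φ y < x :=
    fun x => ⟨fun h => h hyC, fun h c hc => (hmono (hy hc)).trans_lt h⟩
  simp only [hIic, hIio]
  refine psiWord_eq_sum_mul_psiS_Ico K (hCD hyC) ?_
  rintro _ ⟨c, hc, rfl⟩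
  exact (Nat.sub_le _ _).trans ((rho_mono (hy hc)).trans (hrho y))

end Interval

section Subdivision

variable {α β : Type} [PartialOrder α] [PartialOrder β] {φ : α → β}

namespace IsSFS

lemma monotone (hφ : IsSFS φ) : Monotone φ := hφ.1

lemma rho_le_rho_map (hφ : IsSFS φ) (y : α) : rho y ≤ rho (φ y) := hφ.2.1 y

lemma exists_le_map_eq (hφ : IsSFS φ) {y : α} {x : β} (h : φ y ≤ x) :
    ∃ y', y ≤ y' ∧ φ y' = x ∧ rho y' = rho x :=
  hφ.2.2.2.1 y x h

lemma finsum_fiber (hφ : IsSFS φ) {y : α} {x : β} (h : φ y ≤ x) :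
    ∑ᶠ y' ∈ {y' | φ y' = x ∧ y ≤ y'}, (-1 : ℤ) ^ rho y' = (-1) ^ rho x :=
  hφ.2.2.2.2 y x h

variable [Finite β] [OrderTop β] {n : ℕ}

lemma map_eq_top (hgB : IsGradedOfRank β n) (hφ : IsSFS φ) {w : α} (hw : n ≤ rho w) :
    φ w = ⊤ := by
  by_contra h
  have := rho_strictMono (lt_top_iff_ne_top.2 h)
  have := hφ.rho_le_rho_map w
  rw [hgB.rho_top] at *
  omega

variable [Finite α]

lemma ncard_Ioi_ne_one_of_map_eq_top (hgΓ : IsGradedOfRank α n) (hgB : IsGradedOfRank β n) (hφ : IsSFS φ)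
    {z : α} (hz : n ≤ rho z + 1) (hzt : φ z = ⊤) : (Set.Ioi z).ncard ≠ 1 := by
  intro h
  obtain ⟨w, hw⟩ := Set.ncard_eq_one.1 h
  have hzw : z < w := by
    rw [← Set.mem_Ioi, hw]
    exact Set.mem_singleton w
  have hrw : rho w = n := by
    have := rho_strictMono hzw
    have := hgΓ.rho_le w
    omega
  have hfiber : {y' | φ y' = ⊤ ∧ z ≤ y'} = {z, w} := by
    ext y'
    simp only [Set.mem_ofPred_eq, Set.mem_insert_iff, Set.mem_singleton_iff]
    constructor
    · rintro ⟨-, hzy⟩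
      exact hzy.eq_or_lt.imp Eq.symm fun h => Set.eq_of_mem_singleton (hw ▸ h)
    · rintro (rfl | rfl)
      · exact ⟨hzt, le_rfl⟩
      · exact ⟨hφ.map_eq_top hgB hrw.ge, hzw.le⟩
  have hsum := hφ.finsum_fiber (le_top : φ z ≤ ⊤)
  rw [hfiber, finsum_mem_pair hzw.ne, hrw, hgB.rho_top, add_eq_right] at hsum
  exact pow_ne_zero _ (neg_ne_zero.2 one_ne_zero) hsum

lemma ncard_Ioi_eq_one_of_map_ne_top (hgΓ : IsGradedOfRank α n) (hgB : IsGradedOfRank β n) (hφ : IsSFS φ)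
    {z : α} (hz : rho z + 1 = n) (hzt : φ z ≠ ⊤) : (Set.Ioi z).ncard = 1 := by
  have hrank : ∀ w ∈ Set.Ioi z, rho w = n := fun w hw => by
    have := rho_strictMono (Set.mem_Ioi.1 hw)
    have := hgΓ.rho_le w
    omega
  have hfiber : {y' | φ y' = ⊤ ∧ z ≤ y'} = Set.Ioi z := by
    ext y'
    refine ⟨fun ⟨hy', hzy⟩ => hzy.lt_of_ne (by rintro rfl; exact hzt hy'), fun hzy => ?_⟩
    exact ⟨hφ.map_eq_top hgB (hrank y' hzy).ge, hzy.le⟩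
  have hsum := hφ.finsum_fiber (le_top : φ z ≤ ⊤)
  rw [hfiber, finsum_mem_congr rfl fun w hw => by rw [hrank w hw], hgB.rho_top,
    finsum_mem_eq_finite_toFinset_sum _ (Set.toFinite _), Finset.sum_const,
    ← Set.ncard_eq_toFinset_card _, nsmul_eq_mul,
    mul_eq_right₀ (pow_ne_zero _ (neg_ne_zero.2 one_ne_zero))] at hsum
  exact_mod_cast hsum

lemma setOf_covBy_eq_Ioi (hg : IsGradedOfRank α n) {z : α} (hz : n ≤ rho z + 1) :
    {w | z ⋖ w} = Set.Ioi z := by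
  ext w
  refine ⟨CovBy.lt, fun hzw => ⟨hzw, fun v hzv hvw => ?_⟩⟩
  have := rho_strictMono hzv
  have := rho_strictMono hvw
  have := hg.rho_le w
  omega

lemma boundary_eq (hgΓ : IsGradedOfRank α n) (hgB : IsGradedOfRank β n) (hφ : IsSFS φ) :
    boundary α n = φ ⁻¹' Set.Iio ⊤ := by
  ext y
  simp only [boundary, boundaryIn, Set.mem_univ, true_and, Set.mem_ofPred_eq, Set.mem_preimage,
    Set.mem_Iio]
  constructor
  · rintro ⟨z, hz, hcard, hyz⟩
    rw [setOf_covBy_eq_Ioi hgΓ (by omega)] at hcard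
    exact (hφ.monotone hyz).trans_lt
      (lt_top_iff_ne_top.2 fun hzt => hφ.ncard_Ioi_ne_one_of_map_eq_top hgΓ hgB (by omega) hzt hcard)
  · intro hy
    have hyn : rho (φ y) < n := hgB.rho_top ▸ rho_strictMono hy
    obtain ⟨x, hyx, hx⟩ := hgB.exists_le_rho_eq (x := φ y) (k := n - 1) (by omega) (by omega)
    obtain ⟨z, hyz, rfl, hz⟩ := hφ.exists_le_map_eq hyx
    refine ⟨z, by omega, ?_, hyz⟩
    rw [setOf_covBy_eq_Ioi hgΓ (by omega), hφ.ncard_Ioi_eq_one_of_map_ne_top hgΓ hgB (by omega)]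
    intro hzt
    rw [hzt, hgB.rho_top] at hx
    omega

end IsSFS

end Subdivision

theorem decomposition_cdIndex_general
    (K : Type) [Field K]
    (α β : Type) [PartialOrder α] [Finite α] [OrderBot α]
    [PartialOrder β] [Finite β] [OrderTop β] (n : ℕ)
    (hΓ : IsLowerEulerianOfRank α n) (hB : IsEulerianOfRank β n)
    (φ : α → β) (hφ : IsSFS φ) :
    psiS K (Set.univ : Set α) ⊥ n
        - psiS K (boundary α n) ⊥ (n - 1) * la K
        + psiS K (boundary α n) ⊥ (n - 1)
      = ∑ᶠ x : β,
          (psiS K (φ ⁻¹' Set.Iic x) ⊥ (rho x)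
              - psiS K (φ ⁻¹' Set.Iio x) ⊥ (rho x - 1) * la K)
            * (if x = ⊤ then 1 else psiS K (Set.Ico x ⊤) x (n - rho x - 1)) := by
  have := Fintype.ofFinite β
  have hgB : IsGradedOfRank β n := hB.2.2.1
  have hcore := psiS_preimage_Iio_top_eq_sum K hφ.monotone hφ.rho_le_rho_map
  rw [hgB.rho_top] at hcore
  rw [hφ.boundary_eq hΓ.2.1 hgB, finsum_eq_sum_of_fintype,
    ← Finset.add_sum_erase _ _ (Finset.mem_univ ⊤), if_pos rfl, mul_one, Set.Iic_top,
    Set.preimage_univ, hgB.rho_top, hcore]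
  congr 1
  exact Finset.sum_congr rfl fun x hx => by rw [if_neg (Finset.ne_of_mem_erase hx)]

/-- Decomposition theorem for the `cd`-index.  Let `Γ` be lower
Eulerian, `B` Eulerian, both of rank `n`, and `φ : Γ → B` a strong formal subdivision of
rank `0`.  Then `Φ_Γ = ∑_{x ∈ B} ℓ^Φ_{Γ_x} · Φ_{[x, 1̂]}`.  Here `Γ_x = φ⁻¹[0̂, x]`,
the cd-index of the near-Eulerian poset `Γ` is `Φ_Γ = ℓ^Φ_Γ + Φ_{∂Γ}` with
`ℓ^Φ_Γ = Ψ_Γ - Ψ_{∂Γ}·a` (all viewed inside `K⟨a,b⟩`), the local cd-index of `Γ_x` is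
`ℓ^Φ_{Γ_x} = Ψ_{Γ_x} - Ψ_{∂Γ_x}·a` with `∂Γ_x = φ⁻¹[0̂, x)`, and `Φ_{[x,1̂]}` is the
`cd`-index `Ψ_{[x,1̂)}` of the Eulerian interval `[x,1̂]` (equal to `1` for `x = 1̂`,
so that the summand for `x = 0̂` is `1 · Φ_B`). -/
theorem decomposition_cdIndex
    (K : Type) [Field K] [CharZero K]
    (α β : Type) [PartialOrder α] [Finite α] [OrderBot α]
    [PartialOrder β] [Finite β] [OrderBot β] [OrderTop β] (n : ℕ)
    (hΓ : IsLowerEulerianOfRank α n) (hB : IsEulerianOfRank β n)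
    (φ : α → β) (hφ : IsSFS φ) :
    psiS K (Set.univ : Set α) ⊥ n
        - psiS K (boundary α n) ⊥ (n - 1) * la K
        + psiS K (boundary α n) ⊥ (n - 1)
      = ∑ᶠ x : β,
          (psiS K (φ ⁻¹' Set.Iic x) ⊥ (rho x)
              - psiS K (φ ⁻¹' Set.Iio x) ⊥ (rho x - 1) * la K)
            * (if x = ⊤ then 1 else psiS K (Set.Ico x ⊤) x (n - rho x - 1)) :=
  decomposition_cdIndex_general K α β n hΓ hB φ hφ

end CDIndex
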